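/- Abstract base case: let Z : 𝔥¹ → R be a ℚ-linear map into a commutative ℚ-algebra R satisfying (i) Z(w ∗ w') = Z(w)Z(w') for all w, w' ∈ 𝔥¹, (ii) Z(φ(w)) = Z(w) for all w ∈ 𝔥¹ where φ(x) = x+y, φ(y) = −y, and (iii) Z(x^{l-1}y) = 0 for all l ≥ 1. Then for all s ≥ 0, l ≥ 1 and positive integers m₁,…,m_s: −Z(z^{l-1}y z^{m₁-1}y⋯z^{m_s-1}y) + ∑_{i=1}^{s} Z(z^{m₁-1}y⋯z^{m_{i-1}-1}y z^{m_i-1}x z^{l-1}y z^{m_{i+1}-1}y⋯z^{m_s-1}y) = 0. -/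

import Mathlib

noncomputable section

/-- 𝔥 = ℚ⟨x,y⟩. -/
abbrev H : Type := FreeAlgebra ℚ (Fin 2)

/-- The generator x. -/
def Xg : H := FreeAlgebra.ι ℚ (0 : Fin 2)

/-- The generator y. -/
def Yg : H := FreeAlgebra.ι ℚ (1 : Fin 2)

/-- z = x + y. -/
def Zg : H := Xg + Yg

/-- Membership in 𝔥¹ = ℚ + 𝔥y. -/
def MemH1 (a : H) : Prop := ∃ (q : ℚ) (h : H), a = algebraMap ℚ H q + h * Yg

/-- The word z_{k₁}⋯z_{k_d} ∈ 𝔥¹, where z_k = x^{k-1}y. -/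
def zword (K : List ℕ+) : H := (K.map fun k => Xg ^ ((k : ℕ) - 1) * Yg).prod

/-- The harmonic product of two words of 𝔥¹, landing in 𝔥¹ ⊆ 𝔥. -/
def hmulF : List ℕ+ → List ℕ+ → H
  | [], L => zword L
  | K, [] => zword K
  | k :: K, l :: L =>
      Xg ^ ((k : ℕ) - 1) * Yg * hmulF K (l :: L)
      + Xg ^ ((l : ℕ) - 1) * Yg * hmulF (k :: K) L
      + Xg ^ (((k : ℕ) + (l : ℕ)) - 1) * Yg * hmulF K L
termination_by K L => K.length + L.length

/-- The automorphism φ of ℚ⟨x,y⟩ with φ(x) = x + y and φ(y) = -y. -/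
def phi : H →ₐ[ℚ] H := FreeAlgebra.lift ℚ (fun i : Fin 2 => if i = 0 then Xg + Yg else -Yg)

/-- The product z^{m₁-1}y ⋯ z^{m_s-1}y. -/
def zy (ms : List ℕ+) : H := (ms.map fun m => Zg ^ ((m : ℕ) - 1) * Yg).prod

/-! Let `E = baseCaseElement l ms`, the element of `𝔥¹` whose `Z`-value is the left-hand side.
Since `φ` swaps `x` and `z` and negates `y`, it maps `z^{m-1}y` to `-x^{m-1}y`; peeling off the
first letter `z^{m₁-1}y` of `E` and rewriting the new `i = 1` summand with `x = z - y` gives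
exactly the recursion of the harmonic product, so `φ(E) = (-1)^s z_l ∗ z_{m₁}⋯z_{m_s}`. Hence
`Z(E) = Z(φ(E)) = ±Z(z_l) Z(z_{m₁}⋯z_{m_s}) = 0`. -/

lemma phi_Xg : phi Xg = Zg := by simp [phi, Xg, Zg, Yg]

lemma phi_Yg : phi Yg = -Yg := by simp [phi, Yg]

lemma phi_Zg : phi Zg = Xg := by rw [Zg, map_add, phi_Xg, phi_Yg, Zg, add_neg_cancel_right]

lemma phi_Zg_pow_mul_Yg_mul (n : ℕ) (a : H) : phi (Zg ^ n * Yg * a) = -(Xg ^ n * Yg * phi a) := by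
  rw [map_mul, map_mul, map_pow, phi_Zg, phi_Yg, mul_neg, neg_mul]

lemma zy_nil : zy [] = 1 := rfl

lemma zy_cons (m : ℕ+) (L : List ℕ+) : zy (m :: L) = Zg ^ ((m : ℕ) - 1) * Yg * zy L := by
  simp [zy]

lemma zword_cons (m : ℕ+) (L : List ℕ+) :
    zword (m :: L) = Xg ^ ((m : ℕ) - 1) * Yg * zword L := by
  simp [zword]

lemma zword_singleton (l : ℕ+) : zword [l] = Xg ^ ((l : ℕ) - 1) * Yg := by
  simp [zword]

lemma hmulF_nil_left (L : List ℕ+) : hmulF [] L = zword L := by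
  cases L <;> rw [hmulF]

lemma hmulF_nil_right (K : List ℕ+) : hmulF K [] = zword K := by
  cases K <;> simp [hmulF]

lemma hmulF_cons_cons (k l : ℕ+) (K L : List ℕ+) :
    hmulF (k :: K) (l :: L) =
      Xg ^ ((k : ℕ) - 1) * Yg * hmulF K (l :: L)
      + Xg ^ ((l : ℕ) - 1) * Yg * hmulF (k :: K) L
      + Xg ^ ((k : ℕ) + (l : ℕ) - 1) * Yg * hmulF K L := by
  rw [hmulF]

lemma phi_zy (L : List ℕ+) : phi (zy L) = (-1 : ℚ) ^ L.length • zword L := by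
  induction L with
  | nil => simp [zy, zword]
  | cons m L ih =>
    rw [zy_cons, phi_Zg_pow_mul_Yg_mul, ih, zword_cons, List.length_cons, pow_succ, mul_neg_one,
      neg_smul, mul_smul_comm]

lemma exists_mul_Yg_mul_zy_eq (a : H) (L : List ℕ+) : ∃ b : H, a * Yg * zy L = b * Yg := by
  induction L generalizing a with
  | nil => exact ⟨a, by rw [zy_nil, mul_one]⟩
  | cons m L ih =>
    obtain ⟨b, hb⟩ := ih (a * Yg * Zg ^ ((m : ℕ) - 1))
    exact ⟨b, by rw [zy_cons, ← hb]; noncomm_ring⟩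

def insertTerm (l : ℕ+) (ms : List ℕ+) (i : Fin ms.length) : H :=
  zy (ms.take i) * (Zg ^ ((ms.get i : ℕ) - 1) * Xg * Zg ^ ((l : ℕ) - 1) * Yg)
    * zy (ms.drop (i + 1))

def baseCaseElement (l : ℕ+) (ms : List ℕ+) : H :=
  -(Zg ^ ((l : ℕ) - 1) * Yg * zy ms) + ∑ i : Fin ms.length, insertTerm l ms i

lemma insertTerm_succ (l m : ℕ+) (L : List ℕ+) (i : Fin L.length) :
    insertTerm l (m :: L) i.succ = Zg ^ ((m : ℕ) - 1) * Yg * insertTerm l L i := by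
  simp [insertTerm, zy_cons, mul_assoc]

lemma Zg_pow_mul_Xg_mul_Zg_pow (m l : ℕ+) :
    Zg ^ ((m : ℕ) - 1) * Xg * Zg ^ ((l : ℕ) - 1)
      = Zg ^ ((m : ℕ) + (l : ℕ) - 1) - Zg ^ ((m : ℕ) - 1) * Yg * Zg ^ ((l : ℕ) - 1) := by
  have hexp : (m : ℕ) + (l : ℕ) - 1 = ((m : ℕ) - 1) + 1 + ((l : ℕ) - 1) := by
    have := m.pos; have := l.pos; omega
  rw [hexp, pow_add, pow_add, pow_one, show Xg = Zg - Yg by rw [Zg, add_sub_cancel_right]]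
  noncomm_ring

lemma insertTerm_zero (l m : ℕ+) (L : List ℕ+) :
    insertTerm l (m :: L) (0 : Fin (L.length + 1))
      = Zg ^ ((m : ℕ) + (l : ℕ) - 1) * Yg * zy L
        - Zg ^ ((m : ℕ) - 1) * Yg * (Zg ^ ((l : ℕ) - 1) * Yg * zy L) := by
  simp only [insertTerm, Fin.val_zero, List.take_zero, List.get_eq_getElem,
    List.getElem_cons_zero, zero_add, List.drop_succ_cons, List.drop_zero, zy_nil, one_mul]
  rw [Zg_pow_mul_Xg_mul_Zg_pow]
  noncomm_ring

lemma baseCaseElement_cons (l m : ℕ+) (L : List ℕ+) :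
    baseCaseElement l (m :: L) = Zg ^ ((m : ℕ) - 1) * Yg * baseCaseElement l L
      + Zg ^ ((m : ℕ) + (l : ℕ) - 1) * Yg * zy L
      - Zg ^ ((l : ℕ) - 1) * Yg * (Zg ^ ((m : ℕ) - 1) * Yg * zy L) := by
  simp only [baseCaseElement, List.length_cons, Fin.sum_univ_succ, insertTerm_succ,
    ← Finset.mul_sum]
  rw [insertTerm_zero, zy_cons]
  noncomm_ring

lemma phi_baseCaseElement (l : ℕ+) (L : List ℕ+) :
    phi (baseCaseElement l L) = (-1 : ℚ) ^ L.length • hmulF [l] L := by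
  induction L with
  | nil =>
    simp [baseCaseElement, zy_nil, phi_Zg, phi_Yg, hmulF_nil_right, zword_singleton]
  | cons m L ih =>
    rw [baseCaseElement_cons, map_sub, map_add, phi_Zg_pow_mul_Yg_mul, phi_Zg_pow_mul_Yg_mul,
      phi_Zg_pow_mul_Yg_mul, phi_Zg_pow_mul_Yg_mul, ih, phi_zy, hmulF_cons_cons,
      hmulF_nil_left, hmulF_nil_left, zword_cons, Nat.add_comm (l : ℕ)]
    simp only [List.length_cons, pow_succ, mul_neg_one, neg_smul, smul_add, mul_smul_comm]
    noncomm_ring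

lemma memH1_baseCaseElement (l : ℕ+) (ms : List ℕ+) : MemH1 (baseCaseElement l ms) := by
  obtain ⟨b, hb⟩ := exists_mul_Yg_mul_zy_eq (Zg ^ ((l : ℕ) - 1)) ms
  have hterm (i : Fin ms.length) : ∃ c : H, insertTerm l ms i = c * Yg := by
    obtain ⟨c, hc⟩ := exists_mul_Yg_mul_zy_eq
      (zy (ms.take i) * (Zg ^ ((ms.get i : ℕ) - 1) * Xg * Zg ^ ((l : ℕ) - 1))) (ms.drop (i + 1))
    exact ⟨c, by rw [insertTerm, ← hc]; noncomm_ring⟩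
  choose c hc using hterm
  refine ⟨0, -b + ∑ i, c i, ?_⟩
  rw [map_zero, zero_add, baseCaseElement, hb, add_mul, neg_mul, Finset.sum_mul]
  simp only [hc]

/-- Base case: for any ℚ-linear Z : 𝔥¹ → R into a commutative ℚ-algebra
satisfying the harmonic product rule, duality Z∘φ = Z, and Z(x^{l-1}y) = 0,
one has −Z(z^{l-1}y z^{m₁-1}y⋯z^{m_s-1}y)
  + ∑ᵢ Z(z^{m₁-1}y⋯z^{m_i-1}x z^{l-1}y⋯z^{m_s-1}y) = 0. -/
theorem abstract_base_case (R : Type*) [CommRing R] [Algebra ℚ R] (Zm : H →ₗ[ℚ] R)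
    (hharm : ∀ K L : List ℕ+, Zm (hmulF K L) = Zm (zword K) * Zm (zword L))
    (hdual : ∀ a : H, MemH1 a → Zm (phi a) = Zm a)
    (hdepth1 : ∀ l : ℕ+, Zm (Xg ^ ((l : ℕ) - 1) * Yg) = 0)
    (l : ℕ+) (ms : List ℕ+) :
    -(Zm (Zg ^ ((l : ℕ) - 1) * Yg * zy ms))
      + ∑ i : Fin ms.length,
          Zm (zy (ms.take (i : ℕ))
            * (Zg ^ ((ms.get i : ℕ) - 1) * Xg * Zg ^ ((l : ℕ) - 1) * Yg)
            * zy (ms.drop ((i : ℕ) + 1)))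
      = 0 := by
  have hvanish : Zm (baseCaseElement l ms) = 0 := by
    rw [← hdual _ (memH1_baseCaseElement l ms), phi_baseCaseElement, map_smul, hharm,
      zword_singleton, hdepth1, zero_mul, smul_zero]
  simpa only [baseCaseElement, insertTerm, map_add, map_neg, map_sum] using hvanish

end
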